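/- arXiv:2305.02545 — 6 statements merged into one kernel-verified Lean document; each statement's English description precedes it below -/
import Mathlib

section
/- Let G be an α_i-metric graph, and let u,v,x,y be vertices such that x lies on a shortest path between u and v, d(u,x)=d(u,y), and d(v,y) ≤ d(v,x)+k for a nonnegative integer k. Then d(x,y) ≤ k+i+2. -/
open SimpleGraph

variable {V : Type*}

/-- `Itv G u v x` means `x` lies on a shortest `(u,v)`-path, i.e. `x ∈ I(u,v)`. -/
def Itv (G : SimpleGraph V) (u v x : V) : Prop :=
  G.dist u x + G.dist x v = G.dist u v

/-- `G` is an `α_i`-metric graph. -/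
def AlphaI (G : SimpleGraph V) (i : ℕ) : Prop :=
  ∀ u v w x : V, Itv G u w v → Itv G v x w → G.Adj v w →
    G.dist u v + G.dist v x ≤ G.dist u x + i

/-- Eccentricity of a vertex. -/
noncomputable def ecc (G : SimpleGraph V) [Fintype V] (v : V) : ℕ :=
  Finset.univ.sup (fun u => G.dist v u)

/-- Radius of the graph. -/
noncomputable def grad (G : SimpleGraph V) [Fintype V] [Nonempty V] : ℕ :=
  Finset.univ.inf' Finset.univ_nonempty (fun v => ecc G v)

/-- Diameter of the graph. -/
noncomputable def gdiam (G : SimpleGraph V) [Fintype V] : ℕ :=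
  Finset.univ.sup (fun v => ecc G v)

/-! The invariant is `d(x,y) + d(v,x) ≤ d(v,y) + i + 2`, proved by induction on `d(v,y)`.
Replace `y` by a neighbour `z` one step closer to `v` and move `x` along the geodesic so that
`d(u,x) = d(u,z)` again: if `d(u,z) < d(u,y)` move `x` one step towards `u`, if
`d(u,z) = d(u,y)` keep it. If `d(u,z) > d(u,y)`, let `q` be the neighbour of `x` towards `v`;
the edges `yz` and `xq` both climb away from `u` towards `v`, and the `α_i`-condition applied to
them bounds `d(x,y)` directly unless `d(x,y) ≤ d(q,z)`, in which case the pair `(q,z)` takes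
over. -/

namespace SimpleGraph

variable {G : SimpleGraph V}

lemma exists_adj_dist_add_one_eq {a b : V} (h : G.dist a b ≠ 0) :
    ∃ c, G.Adj a c ∧ G.dist c b + 1 = G.dist a b := by
  obtain ⟨p, hp⟩ := exists_walk_of_dist_ne_zero h
  cases p with
  | nil => simp at h
  | cons hac q =>
    refine ⟨_, hac, ?_⟩
    have hq := dist_le q
    rw [Walk.length_cons] at hp
    rcases hac.symm.diff_dist_adj (u := b) with h' | h' | h' <;>
      rw [dist_comm (u := b), dist_comm (u := b)] at h' <;> omega

end SimpleGraph

open SimpleGraph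

variable {G : SimpleGraph V} {i : ℕ} {u v x y z q : V}

lemma Itv.symm (hx : Itv G u v x) : Itv G v u x := by
  unfold Itv at *
  simp only [G.dist_comm] at *
  omega

lemma Itv.dist_le_of_dist_eq (hG : G.Connected) (hx : Itv G u v x)
    (hxy : G.dist u x = G.dist u y) : G.dist x v ≤ G.dist y v := by
  have := hG.dist_triangle (u := u) (v := y) (w := v)
  unfold Itv at hx
  omega

lemma Itv.of_adj_of_dist_add_one_eq (hG : G.Connected) (hx : Itv G u v x) (hxq : G.Adj x q)
    (hqv : G.dist q v + 1 = G.dist x v) : Itv G u v q ∧ G.dist u q = G.dist u x + 1 := by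
  have := hG.dist_triangle (u := u) (v := q) (w := v)
  have := hG.dist_triangle (u := u) (v := x) (w := q)
  rw [dist_eq_one_iff_adj.mpr hxq] at this
  unfold Itv at *
  omega

lemma AlphaI.dist_add_dist_le (hα : AlphaI G i) {a b p t : V} (hab : G.Adj a b)
    (hpb : G.dist p b = G.dist p a + 1) (hat : G.dist a t = G.dist b t + 1) :
    G.dist p a + G.dist a t ≤ G.dist p t + i := by
  have hd : G.dist a b = 1 := dist_eq_one_iff_adj.mpr hab
  exact hα p a b t (by unfold Itv; omega) (by unfold Itv; omega) hab

lemma AlphaI.dist_le_of_adj_of_dist_ne (hα : AlphaI G i) {a b w : V} (hab : G.Adj a b)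
    (hub : G.dist u b = G.dist u a + 1) (hav : G.dist a v = G.dist b v + 1)
    (hw : G.dist u w = G.dist u a) (hne : G.dist w b ≠ G.dist w a) :
    G.dist w a ≤ i ∨ G.dist w a + G.dist a v ≤ G.dist w v + i := by
  rcases hab.diff_dist_adj (u := w) with h | h | h
  · exact absurd h hne
  · exact .inr (hα.dist_add_dist_le hab h hav)
  · have := hα.dist_add_dist_le (p := w) (t := u) hab.symm (by omega)
      (by simp only [G.dist_comm] at *; omega)
    simp only [G.dist_comm] at *
    exact .inl (by omega)

lemma AlphaI.dist_add_le_or_le_dist_of_adj_adj (hα : AlphaI G i)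
    (hxv : G.dist x v ≤ G.dist y v) (hxy : G.dist u x = G.dist u y)
    (hyz : G.Adj y z) (hz : G.dist u z = G.dist u y + 1) (hzv : G.dist z v + 1 = G.dist y v)
    (hxq : G.Adj x q) (hq : G.dist u q = G.dist u x + 1) (hqv : G.dist q v + 1 = G.dist x v) :
    G.dist x y + G.dist x v ≤ G.dist y v + i + 1 ∨ G.dist x y ≤ G.dist q z := by
  by_cases hxz : G.dist x z ≠ G.dist x y
  · have := hα.dist_le_of_adj_of_dist_ne hyz hz hzv.symm hxy hxz
    omega
  by_cases hyq : G.dist y q ≠ G.dist y x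
  · have := hα.dist_le_of_adj_of_dist_ne hxq hq hqv.symm hxy.symm hyq
    simp only [G.dist_comm] at *
    omega
  by_cases hqz : G.dist q z + 1 = G.dist x y
  · have := hα.dist_add_dist_le (p := q) (t := u) hyz.symm
      (by simp only [G.dist_comm] at *; omega) (by simp only [G.dist_comm] at *; omega)
    simp only [G.dist_comm] at *
    omega
  · have := hyz.diff_dist_adj (u := q)
    simp only [G.dist_comm] at *
    omega

theorem AlphaI.dist_add_dist_le_of_itv (hG : G.Connected) (hα : AlphaI G i)
    (hx : Itv G u v x) (hxy : G.dist u x = G.dist u y) :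
    G.dist x y + G.dist x v ≤ G.dist y v + i + 2 := by
  obtain ⟨n, hn⟩ : ∃ n, G.dist y v = n := ⟨_, rfl⟩
  induction n generalizing x y with
  | zero =>
    have := hx.dist_le_of_dist_eq hG hxy
    have := hG.dist_triangle (u := x) (v := v) (w := y)
    simp only [G.dist_comm] at *
    omega
  | succ n ih =>
    obtain ⟨z, hyz, hzv⟩ := exists_adj_dist_add_one_eq (G := G) (a := y) (b := v) (by omega)
    have hxz := hG.dist_triangle (u := x) (v := z) (w := y)
    rw [dist_comm (u := z), dist_eq_one_iff_adj.mpr hyz] at hxz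
    obtain hz | hz | hz : G.dist u z = G.dist u y ∨ G.dist u z = G.dist u y + 1 ∨
        G.dist u z + 1 = G.dist u y := by
      rcases hyz.diff_dist_adj (u := u) with h | h | h <;> omega
    · have := ih hx (hxy.trans hz.symm) (by omega)
      omega
    · have hvx := hx.dist_le_of_dist_eq hG hxy
      rcases Nat.eq_zero_or_pos (G.dist x v) with hxv | hxv
      · have := hG.dist_triangle (u := x) (v := v) (w := y)
        simp only [G.dist_comm] at *
        omega
      obtain ⟨q, hxq, hqv⟩ := exists_adj_dist_add_one_eq (G := G) (a := x) (b := v) (by omega)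
      obtain ⟨hq, hdq⟩ := hx.of_adj_of_dist_add_one_eq hG hxq hqv
      rcases hα.dist_add_le_or_le_dist_of_adj_adj hvx hxy hyz hz hzv hxq hdq hqv with h | h
      · omega
      · have := ih (y := z) hq (by omega) (by omega)
        omega
    · obtain ⟨s, hxs, hsu⟩ := exists_adj_dist_add_one_eq (G := G) (a := x) (b := u)
        (by rw [G.dist_comm]; omega)
      obtain ⟨hs, hds⟩ := hx.symm.of_adj_of_dist_add_one_eq hG hxs hsu
      have := ih (y := z) hs.symm (by simp only [G.dist_comm] at *; omega) (by omega)
      have := hG.dist_triangle (u := x) (v := s) (w := z)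
      rw [dist_eq_one_iff_adj.mpr hxs] at this
      simp only [G.dist_comm] at *
      omega

theorem stmt_0_general (G : SimpleGraph V) (hG : G.Connected) (i k : ℕ)
    (hα : AlphaI G i) (u v x y : V) (hx : Itv G u v x)
    (h1 : G.dist u x = G.dist u y) (h2 : G.dist v y ≤ G.dist v x + k) :
    G.dist x y ≤ k + i + 2 := by
  have := hα.dist_add_dist_le_of_itv hG hx h1
  rw [dist_comm (u := x) (v := v), dist_comm (u := y) (v := v)] at this
  omega

theorem stmt_0 [Fintype V] (G : SimpleGraph V) (hG : G.Connected) (i k : ℕ)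
    (hα : AlphaI G i) (u v x y : V) (hx : Itv G u v x)
    (h1 : G.dist u x = G.dist u y) (h2 : G.dist v y ≤ G.dist v x + k) :
    G.dist x y ≤ k + i + 2 :=
  stmt_0_general G hG i k hα u v x y hx h1 h2
end

section
/- If G is an α_i-metric graph, then for every pair of vertices u,v and every integer k with 0<k<d(u,v), any two vertices x,y in the slice S_k(u,v) = {z ∈ I(u,v) : d(u,z)=k} satisfy d(x,y) ≤ i+1. That is, the interval thinness of G is at most i+1. -/
open SimpleGraph

variable {V : Type*}

/-!
Move two vertices `x, y` of the same slice of `I(u,v)` towards `v` in lockstep, first `x` and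
then `y`, each to a neighbour one step closer to `v`. If a half-step changes the distance of the
pair, the `α_i` condition applied to the traversed edge (looking towards `v` if the distance grew,
towards `u` if it shrank) bounds `d(x,y)` by `i + 1`. Otherwise the distance is carried unchanged
to the next slice, and at `v` the two vertices coincide.
-/

variable {G : SimpleGraph V} {i : ℕ} {a b c u v w x y x' y' : V}

lemma SimpleGraph.exists_adj_dist_add_one_eq_s1 (h : G.dist x v ≠ 0) :
    ∃ x', G.Adj x x' ∧ G.dist x v = G.dist x' v + 1 := by
  obtain ⟨p, hp⟩ := exists_walk_of_dist_ne_zero h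
  cases p with
  | nil => simp at h
  | @cons _ x' _ hadj q =>
    refine ⟨x', hadj, le_antisymm ?_ ?_⟩
    · simpa [dist_eq_one_iff_adj.mpr hadj, add_comm] using
        hadj.reachable.dist_triangle_left (w := v)
    · simpa [← hp] using dist_le q

lemma SimpleGraph.Connected.dist_trichotomy_of_adj (hG : G.Connected) (h : G.Adj b c) (a : V) :
    G.dist a c = G.dist a b + 1 ∨ G.dist a b = G.dist a c + 1 ∨ G.dist a c = G.dist a b := by
  have hbc : G.dist b c = 1 := dist_eq_one_iff_adj.mpr h
  have hcb : G.dist c b = 1 := dist_eq_one_iff_adj.mpr h.symm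
  have h₁ : G.dist a c ≤ G.dist a b + G.dist b c := hG.dist_triangle
  have h₂ : G.dist a b ≤ G.dist a c + G.dist c b := hG.dist_triangle
  omega

lemma Itv.dist_add_one_of_adj (hG : G.Connected) (hx : Itv G u v x) (h : G.Adj x x')
    (hx' : G.dist x v = G.dist x' v + 1) : G.dist u x' = G.dist u x + 1 := by
  have hxx' : G.dist x x' = 1 := dist_eq_one_iff_adj.mpr h
  have h₁ : G.dist u x' ≤ G.dist u x + G.dist x x' := hG.dist_triangle
  have h₂ : G.dist u v ≤ G.dist u x' + G.dist x' v := hG.dist_triangle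
  unfold Itv at hx
  omega

lemma AlphaI.dist_add_le_of_adj (hα : AlphaI G i) (hbc : G.Adj b c)
    (hac : G.dist a c = G.dist a b + 1) (hbw : G.dist b w = G.dist c w + 1) :
    G.dist a b + G.dist b w ≤ G.dist a w + i :=
  hα a b c w (by rw [Itv, dist_eq_one_iff_adj.mpr hbc, hac, add_comm])
    (by rw [Itv, dist_eq_one_iff_adj.mpr hbc, hbw, add_comm]) hbc

lemma AlphaI.dist_le_max_of_adj (hG : G.Connected) (hα : AlphaI G i)
    (hu : G.dist u x = G.dist u y) (hv : G.dist x v = G.dist y v)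
    (hxx' : G.Adj x x') (hx'u : G.dist u x' = G.dist u x + 1) (hx'v : G.dist x v = G.dist x' v + 1)
    (hyy' : G.Adj y y') (hy'u : G.dist u y' = G.dist u y + 1) (hy'v : G.dist y v = G.dist y' v + 1) :
    G.dist x y ≤ max (i + 1) (G.dist x' y') := by
  have := G.dist_comm (u := u) (v := x)
  have := G.dist_comm (u := u) (v := y)
  have := G.dist_comm (u := u) (v := x')
  have := G.dist_comm (u := u) (v := y')
  have := G.dist_comm (u := x) (v := y)
  have := G.dist_comm (u := x') (v := y)
  rcases hG.dist_trichotomy_of_adj hxx' y with h | h | h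
  · have := hα.dist_add_le_of_adj hxx' h hx'v
    omega
  · have := hα.dist_add_le_of_adj hxx'.symm h (w := u) (by omega)
    omega
  rcases hG.dist_trichotomy_of_adj hyy' x' with h | h | h
  · have := hα.dist_add_le_of_adj hyy' h hy'v
    omega
  · have := hα.dist_add_le_of_adj hyy'.symm h (w := u) (by omega)
    omega
  · omega

theorem AlphaI.dist_le_of_itv_of_dist_eq (hG : G.Connected) (hα : AlphaI G i)
    (hx : Itv G u v x) (hy : Itv G u v y) (hxy : G.dist u x = G.dist u y) :
    G.dist x y ≤ i + 1 := by
  induction hm : G.dist x v generalizing x y with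
  | zero =>
    have hyv : G.dist y v = 0 := by unfold Itv at hx hy; omega
    rw [hG.dist_eq_zero_iff] at hm hyv
    simp [hm, hyv]
  | succ m ih =>
    have hv : G.dist x v = G.dist y v := by unfold Itv at hx hy; omega
    obtain ⟨x', hxx', hx'v⟩ := exists_adj_dist_add_one_eq_s1 (by omega : G.dist x v ≠ 0)
    obtain ⟨y', hyy', hy'v⟩ := exists_adj_dist_add_one_eq_s1 (by omega : G.dist y v ≠ 0)
    have hx'u := hx.dist_add_one_of_adj hG hxx' hx'v
    have hy'u := hy.dist_add_one_of_adj hG hyy' hy'v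
    have hx' : Itv G u v x' := by unfold Itv at hx ⊢; omega
    have hy' : Itv G u v y' := by unfold Itv at hy ⊢; omega
    calc G.dist x y ≤ max (i + 1) (G.dist x' y') :=
          hα.dist_le_max_of_adj hG hxy hv hxx' hx'u hx'v hyy' hy'u hy'v
      _ ≤ i + 1 := max_le le_rfl (ih hx' hy' (by omega) (by omega))

theorem stmt_1_general (G : SimpleGraph V) (hG : G.Connected) (i : ℕ)
    (hα : AlphaI G i) (u v x y : V) (k : ℕ)
    (hx : Itv G u v x) (hy : Itv G u v y)
    (hdx : G.dist u x = k) (hdy : G.dist u y = k) :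
    G.dist x y ≤ i + 1 :=
  hα.dist_le_of_itv_of_dist_eq hG hx hy (hdx.trans hdy.symm)

theorem stmt_1 [Fintype V] (G : SimpleGraph V) (hG : G.Connected) (i : ℕ)
    (hα : AlphaI G i) (u v x y : V) (k : ℕ) (hk0 : 0 < k) (hk1 : k < G.dist u v)
    (hx : Itv G u v x) (hy : Itv G u v y)
    (hdx : G.dist u x = k) (hdy : G.dist u y = k) :
    G.dist x y ≤ i + 1 :=
  stmt_1_general G hG i hα u v x y k hx hy hdx hdy
end

section
/- Let G be an α_i-metric graph. For any vertices x,y,v and any integer k with 0 ≤ k ≤ d(x,y), there exists a vertex c in the slice S_k(x,y) such that d(v,c) ≤ max{d(v,x), d(v,y)} - min{d(x,c), d(y,c)} + i. -/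
/-!
Take `c` in the slice `S_k(x,y)` closest to `v`. If `c ≠ v`, let `w` be the neighbour of `c`
on a shortest `(c,v)`-path. If `w` is farther than `c` from `x` (or from `y`), then `c ∈ I(w,x)`
and the `α_i`-condition applied to the edge `wc` gives the bound with `d(x,c)` (or `d(y,c)`).
Otherwise `w` is no farther than `c` from `x` and from `y`, so `w` lies in the same slice and is
closer to `v`, contradicting the choice of `c`.
-/

open SimpleGraph

variable {V : Type*}

variable {G : SimpleGraph V}

def slice (G : SimpleGraph V) (x y : V) (k : ℕ) : Set V :=
  {c | Itv G x y c ∧ G.dist x c = k}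

lemma SimpleGraph.Connected.slice_nonempty (hG : G.Connected) (x y : V) {k : ℕ}
    (hk : k ≤ G.dist x y) : (slice G x y k).Nonempty := by
  obtain ⟨p, hp⟩ := hG.exists_walk_length_eq_dist x y
  have hxc : G.dist x (p.getVert k) ≤ k :=
    (dist_le (p.take k)).trans (by simp [Walk.take_length])
  have hcy : G.dist (p.getVert k) y ≤ G.dist x y - k :=
    (dist_le (p.drop k)).trans (by simp [Walk.drop_length, hp])
  have := hG.dist_triangle (u := x) (v := p.getVert k) (w := y)
  exact ⟨p.getVert k, by unfold Itv; omega, by omega⟩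

lemma SimpleGraph.Connected.exists_adj_dist_add_one (hG : G.Connected) {v c : V} (h : v ≠ c) :
    ∃ w, G.Adj w c ∧ G.dist v w + 1 = G.dist v c := by
  have hpos := hG.pos_dist_of_ne h
  obtain ⟨w, hw, hvw⟩ := hG.slice_nonempty v c (k := G.dist v c - 1) (by omega)
  have hwc : G.dist w c = 1 := by unfold Itv at hw; omega
  exact ⟨w, dist_eq_one_iff_adj.mp hwc, by omega⟩

lemma SimpleGraph.Connected.mem_slice_of_dist_le (hG : G.Connected) {x y c w : V} {k : ℕ}
    (hc : c ∈ slice G x y k) (hxw : G.dist x w ≤ k) (hwy : G.dist w y ≤ G.dist c y) :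
    w ∈ slice G x y k := by
  obtain ⟨hc, rfl⟩ := hc
  have := hG.dist_triangle (u := x) (v := w) (w := y)
  unfold Itv at hc
  exact ⟨by unfold Itv; omega, by omega⟩

lemma AlphaI.dist_add_dist_le_s3 {i : ℕ} (hα : AlphaI G i) {v w c z : V} (hwc : G.Adj w c)
    (hw : G.dist v w + 1 = G.dist v c) (hz : G.dist z w = G.dist z c + 1) :
    G.dist v c + G.dist z c ≤ G.dist v z + i := by
  have hwc' : G.dist w c = 1 := dist_eq_one_iff_adj.mpr hwc
  have hwz : G.dist w z = G.dist z w := dist_comm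
  have hcz : G.dist c z = G.dist z c := dist_comm
  have := hα v w c z (by unfold Itv; omega) (by unfold Itv; omega) hwc
  omega

lemma AlphaI.dist_add_min_le_of_minimalFor {i : ℕ} (hα : AlphaI G i) (hG : G.Connected)
    {x y v c : V} {k : ℕ} (hc : MinimalFor (· ∈ slice G x y k) (G.dist v) c) :
    G.dist v c + min (G.dist x c) (G.dist y c) ≤ max (G.dist v x) (G.dist v y) + i := by
  obtain rfl | hvc := eq_or_ne v c
  · simp only [dist_self, zero_add, dist_comm (u := v)]
    omega
  obtain ⟨w, hwc, hvw⟩ := hG.exists_adj_dist_add_one hvc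
  have hxw := hG.dist_triangle (u := x) (v := c) (w := w)
  have hyw := hG.dist_triangle (u := y) (v := c) (w := w)
  rw [dist_eq_one_iff_adj.mpr hwc.symm] at hxw hyw
  by_cases hx : G.dist x w = G.dist x c + 1
  · have := hα.dist_add_dist_le_s3 hwc hvw hx
    omega
  by_cases hy : G.dist y w = G.dist y c + 1
  · have := hα.dist_add_dist_le_s3 hwc hvw hy
    omega
  have hw : w ∈ slice G x y k := by
    refine hG.mem_slice_of_dist_le hc.1 (by rw [← hc.1.2]; omega) ?_
    rw [dist_comm (u := w), dist_comm (u := c)]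
    omega
  have := hc.2 hw (by omega)
  omega

theorem stmt_3_general (G : SimpleGraph V) (hG : G.Connected) (i : ℕ)
    (hα : AlphaI G i) (x y v : V) (k : ℕ) (hk : k ≤ G.dist x y) :
    ∃ c : V, Itv G x y c ∧ G.dist x c = k ∧
      G.dist v c + min (G.dist x c) (G.dist y c) ≤
        max (G.dist v x) (G.dist v y) + i := by
  obtain ⟨c, hc⟩ := exists_minimalFor_of_wellFoundedLT (· ∈ slice G x y k) (G.dist v)
    (hG.slice_nonempty x y hk)
  exact ⟨c, hc.1.1, hc.1.2, hα.dist_add_min_le_of_minimalFor hG hc⟩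

theorem stmt_3 [Fintype V] (G : SimpleGraph V) (hG : G.Connected) (i : ℕ)
    (hα : AlphaI G i) (x y v : V) (k : ℕ) (hk : k ≤ G.dist x y) :
    ∃ c : V, Itv G x y c ∧ G.dist x c = k ∧
      G.dist v c + min (G.dist x c) (G.dist y c) ≤
        max (G.dist v x) (G.dist v y) + i :=
  stmt_3_general G hG i hα x y v k hk
end

section
/- Let G be an α_i-metric graph. For any vertices x,y,z,v with z ∈ I(x,y), one has d(z,v) ≤ max{d(x,v), d(y,v)} - min{d(x,z), d(y,z)} + 2i+1. -/
open SimpleGraph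

variable {V : Type*}

/-!
Call the vertices `w ∈ I(x,y)` with `d(x,w) = d(x,z)` the slice of `z`. Slices have diameter at
most `i + 1`: two vertices of a slice step towards `x` into the previous slice, the
`α_i`-condition forbids these steps from changing their distance unless it is already `≤ i + 1`,
and we induct on the level.
Now walk from `z` along a geodesic to `v`. While the walk stays in the slice of `z` nothing is
lost; the first step that moves away from `x` (or from `y`) is an edge to which the
`α_i`-condition applies with base point `x` (or `y`), bounding the remaining distance to `v`.
The two error terms `i + 1` and `i` add up to `2i + 1`.
-/

variable {G : SimpleGraph V}

lemma SimpleGraph.Connected.exists_adj_dist_eq_of_dist_eq_add_one (hG : G.Connected) {u v : V}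
    {n : ℕ} (h : G.dist u v = n + 1) : ∃ w, G.Adj v w ∧ G.dist u w = n := by
  rw [dist_comm] at h
  obtain ⟨p, hp⟩ := hG.exists_walk_length_eq_dist v u
  cases p with
  | nil => simp at h
  | @cons _ w _ hvw q =>
    refine ⟨w, hvw, ?_⟩
    have hq : q.length = n := by simp only [Walk.length_cons] at hp; omega
    have hwu := dist_le q
    have hvu : G.dist v u ≤ G.dist v w + G.dist w u := hG.dist_triangle
    rw [dist_eq_one_iff_adj.mpr hvw, h] at hvu
    rw [dist_comm]
    omega

lemma itv_iff {x y z : V} : Itv G x y z ↔ G.dist x z + G.dist y z = G.dist x y := by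
  rw [Itv, dist_comm (u := z)]

lemma Itv.exists_adj_dist_left_eq (hG : G.Connected) {x y z : V} {k : ℕ} (hz : Itv G x y z)
    (hk : G.dist x z = k + 1) :
    ∃ p, G.Adj z p ∧ G.dist x p = k ∧ G.dist y p = G.dist y z + 1 ∧ Itv G x y p := by
  obtain ⟨p, hzp, hpx⟩ := hG.exists_adj_dist_eq_of_dist_eq_add_one hk
  have hyp : G.dist y p ≤ G.dist y z + G.dist z p := hG.dist_triangle
  have hxy : G.dist x y ≤ G.dist x p + G.dist p y := hG.dist_triangle
  rw [dist_eq_one_iff_adj.mpr hzp] at hyp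
  rw [dist_comm (u := p)] at hxy
  rw [itv_iff] at hz
  exact ⟨p, hzp, hpx, by omega, itv_iff.mpr (by omega)⟩

namespace AlphaI

variable {i : ℕ}

lemma dist_add_dist_le_of_adj (hα : AlphaI G i) {u z a w : V} (hza : G.Adj z a)
    (hu : G.dist u a = G.dist u z + 1) (hw : G.dist w a + 1 = G.dist w z) :
    G.dist u z + G.dist z w ≤ G.dist u w + i := by
  have hza' : G.dist z a = 1 := dist_eq_one_iff_adj.mpr hza
  rw [dist_comm (u := w) (v := a), dist_comm (u := w) (v := z)] at hw
  exact hα u z a w (by unfold Itv; omega) (by unfold Itv; omega) hza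

lemma dist_le_or_dist_eq_of_adj (hα : AlphaI G i) {x y z p v : V} (hzp : G.Adj z p)
    (hpx : G.dist x p + 1 = G.dist x z) (hpy : G.dist y p = G.dist y z + 1)
    (hvx : G.dist x v ≤ G.dist x z) (hvy : G.dist y v ≤ G.dist y z + 1) :
    G.dist z v ≤ i + 1 ∨ G.dist p v = G.dist z v := by
  rw [dist_comm (u := p), dist_comm (u := z)]
  refine or_iff_not_imp_left.mpr fun hzv => ?_
  rcases hzp.diff_dist_adj (u := v) with h | h | h
  · exact h
  · have := hα.dist_add_dist_le_of_adj hzp h hpx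
    rw [dist_comm (u := z) (v := x), dist_comm (u := v) (v := x)] at this
    omega
  · have := hα.dist_add_dist_le_of_adj hzp hpy (w := v) (by omega)
    rw [dist_comm (u := z)] at this
    omega

lemma dist_le_of_itv_of_dist_left_eq (hα : AlphaI G i) (hG : G.Connected) {x y z v : V}
    (hz : Itv G x y z) (hv : Itv G x y v) (hzv : G.dist x z = G.dist x v) :
    G.dist z v ≤ i + 1 := by
  obtain ⟨k, hk⟩ : ∃ k, G.dist x z = k := ⟨_, rfl⟩
  induction k generalizing z v with
  | zero =>
    obtain rfl := hG.dist_eq_zero_iff.mp hk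
    obtain rfl := hG.dist_eq_zero_iff.mp (hzv ▸ hk)
    simp
  | succ k ih =>
    obtain ⟨p, hzp, hpx, hpy, hp⟩ := hz.exists_adj_dist_left_eq hG hk
    obtain ⟨q, hvq, hqx, hqy, hq⟩ := hv.exists_adj_dist_left_eq hG (hzv ▸ hk)
    have hyzv : G.dist y z = G.dist y v := by
      rw [itv_iff] at hz hv
      omega
    have hzq := hα.dist_le_or_dist_eq_of_adj (x := x) (v := z) hvq
      (by omega) hqy (by omega) (by omega)
    have hpq := hα.dist_le_or_dist_eq_of_adj (x := x) (v := q) hzp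
      (by omega) hpy (by omega) (by omega)
    have := ih hp hq (by omega) hpx
    rw [dist_comm (u := v), dist_comm (u := q)] at hzq
    omega

lemma exists_itv_dist_add_min_le (hα : AlphaI G i) (hG : G.Connected) {x y z : V}
    (hz : Itv G x y z) (v : V) :
    ∃ w, Itv G x y w ∧ G.dist x w = G.dist x z ∧
      G.dist v w + min (G.dist x z) (G.dist y z) ≤ max (G.dist x v) (G.dist y v) + i := by
  obtain ⟨n, hn⟩ : ∃ n, G.dist v z = n := ⟨_, rfl⟩
  induction n generalizing z with
  | zero =>
    obtain rfl := hG.dist_eq_zero_iff.mp hn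
    exact ⟨v, hz, rfl, by simp; omega⟩
  | succ n ih =>
    obtain ⟨a, hza, hav⟩ := hG.exists_adj_dist_eq_of_dist_eq_add_one hn
    by_cases hxa : G.dist x a = G.dist x z + 1
    · have := hα.dist_add_dist_le_of_adj hza hxa (w := v) (by omega)
      rw [dist_comm (u := z)] at this
      exact ⟨z, hz, rfl, by omega⟩
    by_cases hya : G.dist y a = G.dist y z + 1
    · have := hα.dist_add_dist_le_of_adj hza hya (w := v) (by omega)
      rw [dist_comm (u := z)] at this
      exact ⟨z, hz, rfl, by omega⟩
    have hxy : G.dist x y ≤ G.dist x a + G.dist a y := hG.dist_triangle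
    have hxa' := hza.diff_dist_adj (u := x)
    have hya' := hza.diff_dist_adj (u := y)
    rw [dist_comm (u := a)] at hxy
    rw [itv_iff] at hz
    obtain ⟨w, hw, hxw, hwv⟩ := ih (itv_iff.mpr (by omega)) hav
    exact ⟨w, hw, by omega, by omega⟩

end AlphaI

theorem stmt_4_general (G : SimpleGraph V) (hG : G.Connected) (i : ℕ)
    (hα : AlphaI G i) (x y z v : V) (hz : Itv G x y z) :
    G.dist z v + min (G.dist x z) (G.dist y z) ≤
      max (G.dist x v) (G.dist y v) + 2 * i + 1 := by
  obtain ⟨w, hw, hxw, hwv⟩ := hα.exists_itv_dist_add_min_le hG hz v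
  have hzw := hα.dist_le_of_itv_of_dist_left_eq hG hz hw hxw.symm
  have hzv : G.dist z v ≤ G.dist z w + G.dist w v := hG.dist_triangle
  rw [dist_comm (u := w)] at hzv
  omega

theorem stmt_4 [Fintype V] (G : SimpleGraph V) (hG : G.Connected) (i : ℕ)
    (hα : AlphaI G i) (x y z v : V) (hz : Itv G x y z) :
    G.dist z v + min (G.dist x z) (G.dist y z) ≤
      max (G.dist x v) (G.dist y v) + 2 * i + 1 :=
  stmt_4_general G hG i hα x y z v hz
end

section
/- Let G be an α_i-metric graph and let x,y be vertices with d(x,y) ≥ 4i+2. Then any vertex c ∈ I(x,y) with d(x,c) ≥ 2i+1 and d(y,c) ≥ 2i+1 satisfies e(c) ≤ max{e(x), e(y)}, where e denotes eccentricity. -/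
open SimpleGraph

variable {V : Type*}

/-! Fix `u` and walk from `c` back towards `x` along a geodesic of `I(x,y)`. If `d(u,·)` does
not grow along the first edge `c'c`, induct on `d(x,c)`. If it grows, then `c' ∈ I(u,c)` and
`c ∈ I(c',y)`, so the `α_i` condition gives `d(u,y) ≥ d(u,c) + d(c,y) - i > d(u,c)`. -/

open SimpleGraph

section

variable {G : SimpleGraph V} {x y c c' : V}

lemma SimpleGraph.Reachable.exists_adj_dist_add_one (hr : G.Reachable x c) (hne : x ≠ c) :
    ∃ c', G.Adj c' c ∧ G.dist x c' + 1 = G.dist x c := by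
  obtain ⟨p, hp⟩ := hr.symm.exists_walk_length_eq_dist
  cases p with
  | nil => exact absurd rfl hne
  | @cons _ c' _ hadj q =>
    refine ⟨c', hadj.symm, ?_⟩
    have hq : G.dist c' x ≤ q.length := dist_le q
    have hle : G.dist c x ≤ G.dist c c' + G.dist c' x := hadj.reachable.dist_triangle_left x
    rw [dist_eq_one_iff_adj.mpr hadj] at hle
    simp only [Walk.length_cons] at hp
    rw [dist_comm (u := x), dist_comm (u := x)]
    omega

lemma Itv.reachable (hc : Itv G x y c) (hcy : G.dist c y ≠ 0) : G.Reachable x c := by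
  have hrc : G.Reachable c y := Reachable.of_dist_ne_zero hcy
  by_contra hxc
  have hxy : G.dist x y ≠ 0 := by
    rw [← hc, dist_eq_zero_of_not_reachable hxc]
    simpa using hcy
  exact hxc ((Reachable.of_dist_ne_zero hxy).trans hrc.symm)

lemma Itv.of_adj_dist_add_one (hc : Itv G x y c) (hcy : G.dist c y ≠ 0) (hadj : G.Adj c' c)
    (hc' : G.dist x c' + 1 = G.dist x c) :
    Itv G x y c' ∧ G.dist c' y = G.dist c y + 1 := by
  have hrc' : G.Reachable c' y := hadj.reachable.trans (Reachable.of_dist_ne_zero hcy)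
  have hup : G.dist x y ≤ G.dist x c' + G.dist c' y := hrc'.dist_triangle_right x
  have hdown := hadj.symm.diff_dist_adj (u := y)
  rw [dist_comm (u := y), dist_comm (u := y)] at hdown
  unfold Itv at hc ⊢
  omega

theorem AlphaI.dist_le_max_of_itv {i : ℕ} (hα : AlphaI G i)
    (hc : Itv G x y c) (hcy : i + 1 ≤ G.dist c y) (u : V) :
    G.dist u c ≤ max (G.dist u x) (G.dist u y) := by
  induction hn : G.dist x c generalizing c with
  | zero =>
    have hxc : x = c := ((hc.reachable (by omega)).dist_eq_zero_iff).mp hn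
    exact hxc ▸ le_max_left _ _
  | succ n ih =>
    have hne : x ≠ c := by rintro rfl; simp at hn
    obtain ⟨c', hadj, hc'⟩ := (hc.reachable (by omega)).exists_adj_dist_add_one hne
    obtain ⟨hc'I, hc'y⟩ := hc.of_adj_dist_add_one (by omega) hadj hc'
    have hIH : G.dist u c' ≤ max (G.dist u x) (G.dist u y) := ih hc'I (by omega) (by omega)
    rcases hadj.diff_dist_adj (u := u) with h | h | h
    · omega
    · have hcc' : G.dist c' c = 1 := dist_eq_one_iff_adj.mpr hadj
      have := hα u c' c y (by unfold Itv; omega) (by unfold Itv; omega) hadj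
      omega
    · omega

lemma dist_le_ecc [Fintype V] (v u : V) : G.dist v u ≤ ecc G v :=
  Finset.le_sup (f := fun u => G.dist v u) (Finset.mem_univ u)

end

theorem stmt_5_general [Fintype V] (G : SimpleGraph V) (i : ℕ)
    (hα : AlphaI G i) (x y c : V)
    (hc : Itv G x y c) (hyc : 2 * i + 1 ≤ G.dist y c) :
    ecc G c ≤ max (ecc G x) (ecc G y) := by
  refine Finset.sup_le fun u _ => ?_
  have hu := hα.dist_le_max_of_itv hc (by rw [dist_comm]; omega) u
  simp only [dist_comm (u := u)] at hu
  exact hu.trans (max_le_max (dist_le_ecc x u) (dist_le_ecc y u))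

theorem stmt_5 [Fintype V] (G : SimpleGraph V) (hG : G.Connected) (i : ℕ)
    (hα : AlphaI G i) (x y c : V) (hxy : 4 * i + 2 ≤ G.dist x y)
    (hc : Itv G x y c) (hxc : 2 * i + 1 ≤ G.dist x c) (hyc : 2 * i + 1 ≤ G.dist y c) :
    ecc G c ≤ max (ecc G x) (ecc G y) :=
  stmt_5_general G i hα x y c hc hyc
end

section
/- Let K be a clique in an α_1-metric graph G. Every vertex v has a distance-two gate with respect to K: a vertex v* such that v* lies in the interval I(a,v) for every a ∈ proj(v,K), and d(v*,K) ≤ 2. -/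
open SimpleGraph

variable {V : Type*}

/-!
The vertex `v` itself lies in every interval `I(a, v)`, `a ∈ proj(v, K)`; we walk from `v`
towards the clique `P = proj(v, K)`, keeping all of `P` equidistant, until we are within
distance two of it. One step is possible as long as the common distance `m` to `P` is at
least `3`: in an `α_1`-metric graph the sets `nextSteps G w a`, `a ∈ P`, form a chain, since
`s ∈ nextSteps G w a \ nextSteps G w b` and `t ∈ nextSteps G w b \ nextSteps G w a` would give
`b ∈ I(t, a)`, `a ∈ I(b, s)`, and then `α_1` yields `(m - 1) + m ≤ d(t, s) + 1 ≤ 3`.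
Any vertex of a minimal `nextSteps G w a` therefore lies in all of them.
-/

namespace SimpleGraph

lemma Adj.dist_le_dist_add_one {G : SimpleGraph V} {u v : V} (h : G.Adj u v) (x : V) :
    G.dist u x ≤ G.dist v x + 1 := by
  rw [G.dist_comm, G.dist_comm (u := v)]
  rcases h.symm.diff_dist_adj (u := x) with h' | h' | h' <;> omega

lemma exists_adj_dist_add_one_eq_s18 {G : SimpleGraph V} {u v : V} (h : G.dist u v ≠ 0) :
    ∃ s, G.Adj u s ∧ G.dist s v + 1 = G.dist u v := by
  obtain ⟨p, hp⟩ := exists_walk_of_dist_ne_zero h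
  cases p with
  | nil => simp at h
  | cons hadj q =>
    refine ⟨_, hadj, le_antisymm ?_ (hadj.dist_le_dist_add_one v)⟩
    have := dist_le q
    simp only [Walk.length_cons] at hp
    omega

end SimpleGraph

section AlphaOne

variable {G : SimpleGraph V}

lemma Itv.trans (hG : G.Connected) {a v w s : V} (h₁ : Itv G a v w) (h₂ : Itv G a w s) :
    Itv G a v s := by
  unfold Itv at *
  have := hG.dist_triangle (u := a) (v := s) (w := v)
  have := hG.dist_triangle (u := s) (v := w) (w := v)
  omega

def nextSteps (G : SimpleGraph V) (w a : V) : Set V :=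
  {s | G.Adj w s ∧ G.dist s a + 1 = G.dist w a}

lemma nextSteps_subset_of_not_mem (hG : G.Connected) (hα : AlphaI G 1) {w a b s : V}
    (hab : G.Adj a b) (hwab : G.dist w a = G.dist w b) (h3 : 3 ≤ G.dist w a)
    (hs : s ∈ nextSteps G w a) (hsb : s ∉ nextSteps G w b) :
    nextSteps G w b ⊆ nextSteps G w a := by
  rintro t ⟨hwt, htb⟩
  refine ⟨hwt, ?_⟩
  obtain ⟨hws, hsa⟩ := hs
  have hsb : G.dist s b + 1 ≠ G.dist w b := fun h => hsb ⟨hws, h⟩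
  have hdab : G.dist a b = 1 := dist_eq_one_iff_adj.mpr hab
  have := hws.dist_le_dist_add_one b
  have := hwt.dist_le_dist_add_one a
  have := hG.dist_triangle (u := s) (v := a) (w := b)
  have := hG.dist_triangle (u := t) (v := b) (w := a)
  have := hG.dist_triangle (u := t) (v := w) (w := s)
  have htw : G.dist t w = 1 := dist_eq_one_iff_adj.mpr hwt.symm
  have hws' : G.dist w s = 1 := dist_eq_one_iff_adj.mpr hws
  have hba : G.dist b a = 1 := dist_eq_one_iff_adj.mpr hab.symm
  have hbs : G.dist b s = G.dist s b := G.dist_comm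
  have has : G.dist a s = G.dist s a := G.dist_comm
  by_contra hta
  have hI₁ : Itv G t a b := by unfold Itv; omega
  have hI₂ : Itv G b s a := by unfold Itv; omega
  have := hα t b a s hI₁ hI₂ hab.symm
  omega

lemma exists_forall_mem_nextSteps (hG : G.Connected) (hα : AlphaI G 1) {P : Set V}
    (hP : G.IsClique P) (hPfin : P.Finite) (hPne : P.Nonempty) {w : V} {m : ℕ}
    (hm : ∀ a ∈ P, G.dist w a = m) (h3 : 3 ≤ m) :
    ∃ s, ∀ a ∈ P, s ∈ nextSteps G w a := by
  obtain ⟨a, ha, hmin⟩ := hPfin.exists_minimalFor (nextSteps G w) P hPne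
  obtain ⟨s, hs⟩ := exists_adj_dist_add_one_eq_s18 (u := w) (v := a) (by rw [hm a ha]; omega)
  refine ⟨s, fun b hb => ?_⟩
  by_contra hsb
  have hab : a ≠ b := by rintro rfl; exact hsb hs
  have hsub := nextSteps_subset_of_not_mem hG hα (hP ha hb hab)
    ((hm a ha).trans (hm b hb).symm) (hm a ha ▸ h3) hs hsb
  exact hsb (hmin hb hsub hs)

theorem exists_itv_forall_dist_le_two (hG : G.Connected) (hα : AlphaI G 1) {P : Set V}
    (hP : G.IsClique P) (hPfin : P.Finite) (hPne : P.Nonempty) {v : V}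
    (hv : ∀ a ∈ P, ∀ b ∈ P, G.dist v a = G.dist v b) :
    ∃ w, (∀ a ∈ P, Itv G a v w) ∧ ∀ a ∈ P, G.dist w a ≤ 2 := by
  obtain ⟨a₀, ha₀⟩ := hPne
  suffices ∀ n w, (∀ a ∈ P, Itv G a v w) → G.dist w a₀ = n →
      ∃ w, (∀ a ∈ P, Itv G a v w) ∧ ∀ a ∈ P, G.dist w a ≤ 2 from
    this _ v (fun a _ => by simp [Itv]) rfl
  intro n
  induction n using Nat.strong_induction_on with
  | _ n ih =>
  intro w hw hn
  have hm : ∀ a ∈ P, G.dist w a = n := by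
    intro a ha
    have h₁ : G.dist a w + G.dist w v = G.dist a v := hw a ha
    have h₀ : G.dist a₀ w + G.dist w v = G.dist a₀ v := hw a₀ ha₀
    rw [G.dist_comm (u := a), G.dist_comm (u := a) (v := v)] at h₁
    rw [G.dist_comm (u := a₀), G.dist_comm (u := a₀) (v := v)] at h₀
    have := hv a ha a₀ ha₀
    omega
  rcases le_or_gt n 2 with h2 | h3
  · exact ⟨w, hw, fun a ha => hm a ha ▸ h2⟩
  obtain ⟨s, hs⟩ := exists_forall_mem_nextSteps hG hα hP hPfin ⟨a₀, ha₀⟩ hm h3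
  refine ih (n - 1) (by omega) s (fun a ha => (hw a ha).trans hG ?_) ?_
  · obtain ⟨hws, hsa⟩ := hs a ha
    have hsw : G.dist s w = 1 := dist_eq_one_iff_adj.mpr hws.symm
    have has : G.dist a s = G.dist s a := G.dist_comm
    have haw : G.dist a w = G.dist w a := G.dist_comm
    unfold Itv
    omega
  · have := (hs a₀ ha₀).2
    omega

end AlphaOne

theorem stmt_18 [Fintype V] (G : SimpleGraph V) (hG : G.Connected)
    (hα : AlphaI G 1) (K : Set V) (hK : G.IsClique K) (hKne : K.Nonempty) (v : V) :
    ∃ vstar : V,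
      (∀ a ∈ K, (∀ b ∈ K, G.dist v a ≤ G.dist v b) → Itv G a v vstar) ∧
      (∃ a ∈ K, G.dist vstar a ≤ 2) := by
  let P : Set V := {a ∈ K | ∀ b ∈ K, G.dist v a ≤ G.dist v b}
  obtain ⟨a₀, ha₀K, ha₀⟩ := Set.exists_min_image K (G.dist v) K.toFinite hKne
  obtain ⟨w, hw, h2⟩ := exists_itv_forall_dist_le_two (P := P) hG hα
    (hK.subset fun _ ha => ha.1) (K.toFinite.subset fun _ ha => ha.1) ⟨a₀, ha₀K, ha₀⟩
    (fun a ha b hb => (ha.2 b hb.1).antisymm (hb.2 a ha.1))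
  exact ⟨w, fun a ha hmin => hw a ⟨ha, hmin⟩, a₀, ha₀K, h2 a₀ ⟨ha₀K, ha₀⟩⟩
end
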